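/- Fix a natural number \(\ell\) and define \(\xi_{n\ell} = \frac{(-1)^{\ell+1}\,(1-2^{-2\ell-2n-1})}{n!\,(2\ell+2n+2)}\, B_{2\ell+2n+2}\) for \(n\ge 0\), where \(B_m\) are the Bernoulli numbers. Then for every natural number \(N\) there exist constants \(C>0\) and \(\delta>0\) such that for all \(0<t<\delta\), \[\Big|\,2\int_{0}^{\infty}\frac{r^{2\ell+1}\, e^{-t r^{2}}}{1+e^{2\pi r}}\,dr \;+\; \sum_{n=0}^{N}\xi_{n\ell}\, t^{n}\,\Big| \le C\, t^{N+1}.\] In other words, \(2\int_{0}^{\infty}\frac{r^{2\ell+1} e^{-t r^{2}}}{1+e^{2\pi r}}dr \sim -\sum_{n\ge 0}\xi_{n\ell} t^{n}\) as \(t\to 0^+\). -/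

import Mathlib

/-!
Write `w(r) = r^(2ℓ+1) / (1 + e^(2πr))`. For `x ≥ 0` the Taylor remainder of `e^(-x)` after
`N + 1` terms is at most `x^(N+1)/(N+1)!` in absolute value; applied at `x = t r²` this shows
that `∫ e^(-tr²) w` differs from `∑_{n ≤ N} (-t)^n/n! ∫ r^(2n) w` by at most
`t^(N+1)/(N+1)! ∫ r^(2N+2) w`. The moments are computed by expanding
`1/(1 + e^(2πr)) = ∑_k (-1)^k e^(-2π(k+1)r)`, integrating termwise (Gamma integrals) and summing
the alternating series `∑_k (-1)^k/(k+1)^(2j+2)` with the Fourier series of the Bernoulli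
polynomial `B_(2j+2)` at `1/2`. This gives
`2 ∫ r^(2j+1)/(1 + e^(2πr)) = (-1)^j (1 - 2^(-2j-1)) B_(2j+2)/(2j+2)`, which at `j = ℓ + n` is
`-(-1)^n n! ξ_(nℓ)`.
-/

open MeasureTheory Real Set

/-- The coefficients `ξ_{nℓ}` of the paper, Eq. (16). -/
noncomputable def xi (n ℓ : ℕ) : ℝ :=
  (-1 : ℝ) ^ (ℓ + 1) * (1 - (2 : ℝ) ^ (-(2 * (ℓ : ℤ) + 2 * n + 1))) /
      ((n.factorial : ℝ) * (2 * ℓ + 2 * n + 2)) *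
    ((bernoulli (2 * ℓ + 2 * n + 2) : ℚ) : ℝ)

open scoped Nat

theorem hasDerivAt_sum_range_neg_pow_div_factorial (n : ℕ) (x : ℝ) :
    HasDerivAt (fun y : ℝ => ∑ m ∈ Finset.range (n + 1), (-y) ^ m / m !)
      (-∑ m ∈ Finset.range n, (-x) ^ m / m !) x := by
  induction n with
  | zero => simpa using hasDerivAt_const x (1 : ℝ)
  | succ n ih =>
    simp_rw [Finset.sum_range_succ _ (n + 1)]
    refine (ih.add (((hasDerivAt_neg x).pow (n + 1)).div_const ((n + 1)! : ℝ))).congr_deriv ?_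
    rw [Finset.sum_range_succ, Nat.factorial_succ]
    push_cast
    field_simp
    ring

theorem abs_exp_neg_sub_sum_le (n : ℕ) {x : ℝ} (hx : 0 ≤ x) :
    |exp (-x) - ∑ m ∈ Finset.range n, (-x) ^ m / m !| ≤ x ^ n / n ! := by
  induction n generalizing x with
  | zero => simpa [abs_of_pos (exp_pos _)] using hx
  | succ n ih =>
    have hderiv (y : ℝ) :
        HasDerivAt (fun y => exp (-y) - ∑ m ∈ Finset.range (n + 1), (-y) ^ m / m !)
          (-(exp (-y) - ∑ m ∈ Finset.range n, (-y) ^ m / m !)) y :=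
      (((hasDerivAt_neg y).exp).sub (hasDerivAt_sum_range_neg_pow_div_factorial n y)).congr_deriv
        (by ring)
    have hB (y : ℝ) : HasDerivAt (fun y : ℝ => y ^ (n + 1) / (n + 1)!) (y ^ n / n !) y := by
      refine ((hasDerivAt_pow (n + 1) y).div_const ((n + 1)! : ℝ)).congr_deriv ?_
      rw [Nat.factorial_succ]; push_cast; field_simp
    refine image_norm_le_of_norm_deriv_right_le_deriv_boundary (a := 0) (b := x)
      (fun y _ => (hderiv y).continuousAt.continuousWithinAt)
      (fun y _ => (hderiv y).hasDerivWithinAt) (by simp [Finset.sum_range_succ']) hB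
      (fun y hy => ?_) ⟨hx, le_rfl⟩
    rw [norm_neg]
    exact ih hy.1

theorem abs_integral_exp_neg_mul_sq_mul_sub_sum_le {μ : Measure ℝ} {w : ℝ → ℝ}
    (hw : ∀ n, Integrable (fun r => r ^ (2 * n) * w r) μ) (n : ℕ) {t : ℝ} (ht : 0 ≤ t) :
    |∫ r, exp (-t * r ^ 2) * w r ∂μ -
        ∑ m ∈ Finset.range n, (-t) ^ m / m ! * ∫ r, r ^ (2 * m) * w r ∂μ|
      ≤ t ^ n / n ! * ∫ r, r ^ (2 * n) * |w r| ∂μ := by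
  have hw₀ : Integrable w μ := by simpa using hw 0
  have hexp : Integrable (fun r => exp (-t * r ^ 2) * w r) μ :=
    hw₀.bdd_mul (by fun_prop) (c := 1) (Filter.Eventually.of_forall fun r => by
      rw [norm_of_nonneg (exp_pos _).le, exp_le_one_iff]; nlinarith [sq_nonneg r])
  have hsum :
      Integrable (fun r => ∑ m ∈ Finset.range n, (-t) ^ m / m ! * (r ^ (2 * m) * w r)) μ :=
    integrable_finsetSum _ fun m _ => (hw m).const_mul _
  have hbound : Integrable (fun r => t ^ n / n ! * (r ^ (2 * n) * |w r|)) μ := by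
    refine ((hw n).norm.const_mul (t ^ n / n !)).congr (Filter.Eventually.of_forall fun r => ?_)
    simp [pow_mul]
  simp_rw [← integral_const_mul]
  rw [← integral_finsetSum _ fun m _ => (hw m).const_mul _, ← integral_sub hexp hsum,
    ← Real.norm_eq_abs]
  refine norm_integral_le_of_norm_le hbound (Filter.Eventually.of_forall fun r => ?_)
  have hTaylor := abs_exp_neg_sub_sum_le n (mul_nonneg ht (sq_nonneg r))
  calc ‖exp (-t * r ^ 2) * w r - ∑ m ∈ Finset.range n, (-t) ^ m / m ! * (r ^ (2 * m) * w r)‖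
      = |exp (-(t * r ^ 2)) - ∑ m ∈ Finset.range n, (-(t * r ^ 2)) ^ m / m !| * |w r| := by
        rw [Real.norm_eq_abs, ← abs_mul, sub_mul, Finset.sum_mul]
        congr 2
        · rw [neg_mul]
        · refine Finset.sum_congr rfl fun m _ => ?_
          rw [pow_mul]; ring
    _ ≤ (t * r ^ 2) ^ n / n ! * |w r| := by gcongr
    _ = t ^ n / n ! * (r ^ (2 * n) * |w r|) := by rw [pow_mul]; ring

theorem integrableOn_pow_mul_exp_neg_mul (q : ℕ) {c : ℝ} (hc : 0 < c) :
    IntegrableOn (fun r : ℝ => r ^ q * exp (-(c * r))) (Ioi 0) := by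
  simpa [Real.rpow_natCast] using
    integrableOn_rpow_mul_exp_neg_mul_rpow (p := 1) (s := q)
      (by linarith [q.cast_nonneg (α := ℝ)]) one_pos hc

theorem integral_pow_mul_exp_neg_mul (q : ℕ) {c : ℝ} (hc : 0 < c) :
    ∫ r in Ioi (0 : ℝ), r ^ q * exp (-(c * r)) = q ! / c ^ (q + 1) := by
  have h := integral_rpow_mul_exp_neg_mul_Ioi (a := (q : ℝ) + 1) (by positivity) hc
  rw [Real.Gamma_nat_eq_factorial, add_sub_cancel_right, ← Nat.cast_add_one,
    Real.rpow_natCast] at h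
  simp_rw [Real.rpow_natCast] at h
  rw [h, one_div_pow, div_mul_eq_mul_div, one_mul]

theorem hasSum_inv_one_add_exp {x : ℝ} (hx : 0 < x) :
    HasSum (fun k : ℕ => (-1) ^ k * exp (-((k + 1) * x))) (1 + exp x)⁻¹ := by
  have hq : ‖-exp (-x)‖ < 1 := by simpa [abs_of_pos (exp_pos _)] using hx
  have hterm : (fun k : ℕ => (-1) ^ k * exp (-((k + 1) * x)))
      = fun k : ℕ => exp (-x) * (-exp (-x)) ^ k := by
    ext k
    rw [neg_pow (exp (-x)), ← exp_nat_mul, mul_left_comm, ← exp_add]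
    congr 2
    ring
  have hsum : (1 + exp x)⁻¹ = exp (-x) * (1 - -exp (-x))⁻¹ := by
    have := exp_pos x
    rw [exp_neg, sub_neg_eq_add]
    field_simp
    ring
  rw [hterm, hsum]
  exact (hasSum_geometric_of_norm_lt_one hq).mul_left (exp (-x))

theorem inv_one_add_exp_le (x : ℝ) : (1 + exp x)⁻¹ ≤ exp (-x) := by
  rw [exp_neg]
  exact inv_anti₀ (exp_pos x) (by linarith [exp_pos x])

theorem integrableOn_pow_div_one_add_exp (q : ℕ) {c : ℝ} (hc : 0 < c) :
    IntegrableOn (fun r : ℝ => r ^ q / (1 + exp (c * r))) (Ioi 0) := by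
  have hcont : Continuous fun r : ℝ => r ^ q / (1 + exp (c * r)) :=
    (continuous_pow q).div (by fun_prop) fun r => by positivity
  refine (integrableOn_pow_mul_exp_neg_mul q hc).mono' hcont.aestronglyMeasurable ?_
  refine ae_restrict_of_forall_mem measurableSet_Ioi fun r (hr : 0 < r) => ?_
  rw [norm_of_nonneg (by positivity), div_eq_mul_inv]
  gcongr
  exact inv_one_add_exp_le _

theorem hasSum_integral_pow_div_one_add_exp {q : ℕ} (hq : q ≠ 0) {c : ℝ} (hc : 0 < c) :
    HasSum (fun k : ℕ => (-1) ^ k * (q ! / ((k + 1) * c) ^ (q + 1)))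
      (∫ r in Ioi (0 : ℝ), r ^ q / (1 + exp (c * r))) := by
  have hck (k : ℕ) : 0 < (k + 1) * c := by positivity
  set F : ℕ → ℝ → ℝ := fun k r => (-1) ^ k * (r ^ q * exp (-((k + 1) * c * r)))
  have hF_int (k : ℕ) : IntegrableOn (F k) (Ioi 0) :=
    (integrableOn_pow_mul_exp_neg_mul q (hck k)).const_mul _
  have hF_norm (k : ℕ) : ∫ r in Ioi (0 : ℝ), ‖F k r‖ = q ! / ((k + 1) * c) ^ (q + 1) := by
    rw [← integral_pow_mul_exp_neg_mul q (hck k)]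
    refine setIntegral_congr_fun measurableSet_Ioi fun r (hr : 0 < r) => ?_
    simp [F, abs_of_pos hr]
  have hF_summable : Summable fun k => ∫ r in Ioi (0 : ℝ), ‖F k r‖ := by
    have hp : Summable fun k : ℕ => 1 / ((k : ℝ) + 1) ^ (q + 1) := by
      simpa using (summable_nat_add_iff 1).mpr
        (Real.summable_one_div_nat_pow.mpr (by omega : 1 < q + 1))
    refine (hp.mul_left (q ! / c ^ (q + 1))).congr fun k => ?_
    rw [hF_norm, mul_pow]
    field_simp
  have hF_sum : ∀ r ∈ Ioi (0 : ℝ), ∑' k, F k r = r ^ q / (1 + exp (c * r)) := fun r hr => by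
    have hr : 0 < c * r := mul_pos hc hr
    rw [div_eq_mul_inv, ← ((hasSum_inv_one_add_exp hr).mul_left (r ^ q)).tsum_eq]
    congr 1 with k
    simp only [F, mul_assoc]
    ring
  rw [← setIntegral_congr_fun measurableSet_Ioi hF_sum]
  refine (hasSum_integral_of_summable_integral_norm hF_int hF_summable).congr_fun fun k => ?_
  simp only [F]
  rw [integral_const_mul, integral_pow_mul_exp_neg_mul q (hck k)]

theorem hasSum_neg_one_pow_div_succ_pow {k : ℕ} (hk : k ≠ 0) :
    HasSum (fun n : ℕ => (-1) ^ n / ((n : ℝ) + 1) ^ (2 * k))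
      ((-1) ^ k * (2 * π) ^ (2 * k) / 2 / (2 * k)! *
        ((2 / 2 ^ (2 * k) - 1) * bernoulli (2 * k))) := by
  have h := hasSum_one_div_nat_pow_mul_cos hk (x := 2⁻¹) ⟨by norm_num, by norm_num⟩
  rw [← bernoulliFun, bernoulliFun_eval_half] at h
  have h' := ((hasSum_nat_add_iff' 1).mpr h).neg
  simp only [Finset.range_one, Finset.sum_singleton, Nat.cast_zero,
    zero_pow (by omega : 2 * k ≠ 0), div_zero, zero_mul, sub_zero] at h'
  have hterm : (fun n : ℕ => (-1) ^ n / ((n : ℝ) + 1) ^ (2 * k)) = fun n : ℕ =>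
      -(1 / ((n + 1 : ℕ) : ℝ) ^ (2 * k) * cos (2 * π * ((n + 1 : ℕ) : ℝ) * 2⁻¹)) := by
    ext n
    rw [show 2 * π * ((n + 1 : ℕ) : ℝ) * 2⁻¹ = ((n + 1 : ℕ) : ℝ) * π by ring,
      cos_nat_mul_pi]
    push_cast
    ring
  simpa only [hterm, pow_succ, mul_neg_one, neg_mul, neg_div, neg_neg] using h'

theorem two_mul_integral_odd_pow_div_one_add_exp (j : ℕ) :
    2 * ∫ r in Ioi (0 : ℝ), r ^ (2 * j + 1) / (1 + exp (2 * π * r))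
      = (-1) ^ j * (1 - (2 : ℝ) ^ (-(2 * (j : ℤ) + 1))) * bernoulli (2 * j + 2) /
          (2 * j + 2) := by
  have hπ : 0 < 2 * π := by positivity
  have hlaplace := hasSum_integral_pow_div_one_add_exp (q := 2 * j + 1) (by omega) hπ
  have heta := (hasSum_neg_one_pow_div_succ_pow (k := j + 1) (by omega)).mul_left
    ((2 * j + 1)! / (2 * π) ^ (2 * j + 2))
  rw [show 2 * (j + 1) = 2 * j + 1 + 1 by ring] at heta
  have hterms :
      (fun k : ℕ => (-1) ^ k * ((2 * j + 1)! / ((k + 1) * (2 * π)) ^ (2 * j + 1 + 1))) =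
        fun k : ℕ => (2 * j + 1)! / (2 * π) ^ (2 * j + 2) *
          ((-1) ^ k / ((k : ℝ) + 1) ^ (2 * j + 1 + 1)) := by
    ext k
    rw [mul_pow]
    field_simp
  rw [hterms] at hlaplace
  rw [hlaplace.unique heta, show (2 * j + 1 + 1)! = (2 * j + 2) * (2 * j + 1)! from
    Nat.factorial_succ _, zpow_neg,
    show 2 * (j : ℤ) + 1 = ((2 * j + 1 : ℕ) : ℤ) by push_cast; ring, zpow_natCast]
  push_cast
  field_simp
  ring

noncomputable def remainderWeight (ℓ : ℕ) (r : ℝ) : ℝ :=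
  r ^ (2 * ℓ + 1) / (1 + exp (2 * π * r))

theorem pow_mul_remainderWeight (n ℓ : ℕ) (r : ℝ) :
    r ^ (2 * n) * remainderWeight ℓ r = remainderWeight (ℓ + n) r := by
  simp only [remainderWeight]; ring

theorem integrableOn_pow_mul_remainderWeight (n ℓ : ℕ) :
    IntegrableOn (fun r => r ^ (2 * n) * remainderWeight ℓ r) (Ioi 0) := by
  simp_rw [pow_mul_remainderWeight, remainderWeight]
  exact integrableOn_pow_div_one_add_exp _ (by positivity)

theorem xi_mul_pow_eq (n ℓ : ℕ) (t : ℝ) :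
    xi n ℓ * t ^ n =
      -(2 * ((-t) ^ n / n ! * ∫ r in Ioi (0 : ℝ), r ^ (2 * n) * remainderWeight ℓ r)) := by
  have hsign : (-1 : ℝ) ^ n * (-1) ^ (ℓ + n) = (-1) ^ ℓ := by
    rw [pow_add, mul_left_comm, ← pow_add, ← two_mul, pow_mul, neg_one_sq, one_pow, mul_one]
  simp_rw [pow_mul_remainderWeight, remainderWeight]
  rw [mul_left_comm (2 : ℝ), two_mul_integral_odd_pow_div_one_add_exp, xi,
    show 2 * (ℓ + n) + 2 = 2 * ℓ + 2 * n + 2 by ring,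
    show 2 * ((ℓ + n : ℕ) : ℤ) + 1 = 2 * ℓ + 2 * n + 1 by push_cast; ring, neg_pow]
  set X := (1 - (2 : ℝ) ^ (-(2 * (ℓ : ℤ) + 2 * n + 1))) * bernoulli (2 * ℓ + 2 * n + 2)
  push_cast
  field_simp
  linear_combination X * t ^ n * hsign

theorem two_mul_integral_add_sum_xi_mul_pow (ℓ N : ℕ) (t : ℝ) :
    2 * (∫ r in Ioi (0 : ℝ), r ^ (2 * ℓ + 1) * exp (-t * r ^ 2) / (1 + exp (2 * π * r))) +
        ∑ n ∈ Finset.range (N + 1), xi n ℓ * t ^ n =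
      2 * ((∫ r in Ioi (0 : ℝ), exp (-t * r ^ 2) * remainderWeight ℓ r) -
        ∑ n ∈ Finset.range (N + 1),
          (-t) ^ n / n ! * ∫ r in Ioi (0 : ℝ), r ^ (2 * n) * remainderWeight ℓ r) := by
  simp_rw [xi_mul_pow_eq, Finset.sum_neg_distrib, ← Finset.mul_sum, remainderWeight,
    mul_div_assoc', mul_comm (exp _)]
  ring

/-- The remainder integral `2∫_0^∞ r^(2ℓ+1) e^(-tr²)/(1+e^(2πr)) dr` has the
asymptotic expansion `-∑_n ξ_{nℓ} t^n` as `t → 0⁺`. -/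
theorem remainder_asymptotic_expansion (ℓ : ℕ) (N : ℕ) :
    ∃ C > (0 : ℝ), ∃ δ > (0 : ℝ), ∀ t : ℝ, 0 < t → t < δ →
      |2 * (∫ r in Ioi (0 : ℝ),
          r ^ (2 * ℓ + 1) * Real.exp (-t * r ^ 2) / (1 + Real.exp (2 * π * r))) +
        ∑ n ∈ Finset.range (N + 1), xi n ℓ * t ^ n| ≤ C * t ^ (N + 1) := by
  set K := ∫ r in Ioi (0 : ℝ), r ^ (2 * (N + 1)) * |remainderWeight ℓ r|
  have hK : 0 ≤ K := integral_nonneg fun r => by rw [pow_mul]; positivity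
  refine ⟨2 * K / (N + 1)! + 1, by positivity, 1, one_pos, fun t ht _ => ?_⟩
  have hremainder := abs_integral_exp_neg_mul_sq_mul_sub_sum_le
    (fun n => integrableOn_pow_mul_remainderWeight n ℓ) (N + 1) ht.le
  rw [two_mul_integral_add_sum_xi_mul_pow, abs_mul, abs_two]
  calc 2 * |_| ≤ 2 * (t ^ (N + 1) / (N + 1)! * K) := by gcongr
    _ = 2 * K / (N + 1)! * t ^ (N + 1) := by ring
    _ ≤ (2 * K / (N + 1)! + 1) * t ^ (N + 1) := by gcongr; linarith
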